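/- arXiv:1601.00096 — 2 statements merged into one kernel-verified Lean document; each statement's English description precedes it below -/
import Mathlib

section
/- If D : W → G is a generalized Dedekind symbol with reciprocity function f (i.e. D(p,q)=D(p,q+p), D(p,-q)=D(-p,q), and D(p,q)·D(q,-p)⁻¹=f(p,q)), then f itself is a reciprocity function: it satisfies f(p,-q)=f(-p,q), f(p,q)·f(-q,p)=1_G, and f(p,p+q)·f(p+q,q)=f(p,q). -/
/-!
Every identity for `f` is obtained by expanding `f p q = D p q * (D q (-p))⁻¹` on both sides:
the sign rule `D p (-q) = D (-p) q` gives the first two identities, and invariance of `D p ·`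
under translation by `p` turns the left side of the three-term identity into a telescoping product.
-/

namespace DedekindSymbol

variable {G : Type*} {D f : ℤ → ℤ → G}

theorem apply_self_add (hper : ∀ p q : ℤ, Int.gcd p q = 1 → D p q = D p (q + p))
    {p q : ℤ} (h : Int.gcd p q = 1) : D p (p + q) = D p q := by
  rw [hper p q h, add_comm]

theorem apply_neg_neg (hneg : ∀ p q : ℤ, Int.gcd p q = 1 → D p (-q) = D (-p) q)
    {p q : ℤ} (h : Int.gcd p q = 1) : D (-p) (-q) = D p q := by
  simpa using hneg (-p) q (by rwa [Int.neg_gcd])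

theorem reciprocity_neg_left [Group G] (hf : ∀ p q : ℤ, Int.gcd p q = 1 → D p q * (D q (-p))⁻¹ = f p q)
    {p q : ℤ} (h : Int.gcd p q = 1) : f (-p) q = D (-p) q * (D q p)⁻¹ := by
  simpa using (hf (-p) q (by rwa [Int.neg_gcd])).symm

theorem reciprocity_neg_right [Group G] (hneg : ∀ p q : ℤ, Int.gcd p q = 1 → D p (-q) = D (-p) q)
    (hf : ∀ p q : ℤ, Int.gcd p q = 1 → D p q * (D q (-p))⁻¹ = f p q)
    {p q : ℤ} (h : Int.gcd p q = 1) : f p (-q) = f (-p) q := by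
  rw [← hf p (-q) (by rwa [Int.gcd_neg]), reciprocity_neg_left hf h, hneg p q h,
    apply_neg_neg hneg (by rwa [Int.gcd_comm])]

theorem reciprocity_mul_swap [Group G] (hneg : ∀ p q : ℤ, Int.gcd p q = 1 → D p (-q) = D (-p) q)
    (hf : ∀ p q : ℤ, Int.gcd p q = 1 → D p q * (D q (-p))⁻¹ = f p q)
    {p q : ℤ} (h : Int.gcd p q = 1) : f p q * f (-q) p = 1 := by
  have hqp : Int.gcd q p = 1 := by rwa [Int.gcd_comm]
  rw [← hf p q h, reciprocity_neg_left hf hqp, ← hneg q p hqp]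
  group

theorem reciprocity_add [Group G] (hper : ∀ p q : ℤ, Int.gcd p q = 1 → D p q = D p (q + p))
    (hf : ∀ p q : ℤ, Int.gcd p q = 1 → D p q * (D q (-p))⁻¹ = f p q)
    {p q : ℤ} (h : Int.gcd p q = 1) : f p (p + q) * f (p + q) q = f p q := by
  have hp : Int.gcd p (p + q) = 1 := by rwa [Int.gcd_self_add_right]
  have hq : Int.gcd (p + q) q = 1 := by rwa [Int.gcd_add_self_left]
  have h₁ : D (p + q) (-p) = D (p + q) q := by
    rw [hper (p + q) (-p) (by rwa [Int.gcd_neg, Int.gcd_comm]), neg_add_cancel_left]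
  have h₂ : D q (-(p + q)) = D q (-p) := by
    rw [hper q (-(p + q)) (by rwa [Int.gcd_neg, Int.gcd_comm]), neg_add, neg_add_cancel_right]
  rw [← hf p (p + q) hp, ← hf (p + q) q hq, ← hf p q h, apply_self_add hper h, h₁, h₂]
  group

end DedekindSymbol

/-- The function f associated to a generalized Dedekind symbol D
is a reciprocity function. -/
theorem dedekind_symbol_gives_reciprocity {G : Type*} [Group G]
    (D f : ℤ → ℤ → G)
    (h19 : ∀ p q : ℤ, Int.gcd p q = 1 → D p q = D p (q + p))
    (h110 : ∀ p q : ℤ, Int.gcd p q = 1 → D p (-q) = D (-p) q)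
    (h111 : ∀ p q : ℤ, Int.gcd p q = 1 → D p q * (D q (-p))⁻¹ = f p q) :
    (∀ p q : ℤ, Int.gcd p q = 1 → f p (-q) = f (-p) q) ∧
    (∀ p q : ℤ, Int.gcd p q = 1 → f p q * f (-q) p = 1) ∧
    (∀ p q : ℤ, Int.gcd p q = 1 → f p (p + q) * f (p + q) q = f p q) :=
  ⟨fun _ _ => DedekindSymbol.reciprocity_neg_right h110 h111,
    fun _ _ => DedekindSymbol.reciprocity_mul_swap h110 h111,
    fun _ _ => DedekindSymbol.reciprocity_add h19 h111⟩
end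

section
/- Given a group G, any G-valued reciprocity function f on W uniquely determines a generalized Dedekind symbol D with reciprocity function f: there exists exactly one map D : W → G satisfying D(p,q)=D(p,q+p), D(p,-q)=D(-p,q), D(p,q)·D(q,-p)⁻¹=f(p,q), and the normalization D(1,0)=1_G. -/
/-!
Reciprocity and periodicity force `D p q = f p q * D q ((-p) % q)`, a Euclidean-algorithm
recursion in which `|q|` strictly decreases; it ends at `D (±1) 0 = D 1 0`, which gives uniqueness.
For existence, run this recursion as a definition on reduced pairs `0 ≤ r < a`: periodicity and
the sign symmetry then hold by construction, and the reciprocity law is proved for `p, q > 0` by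
induction on `p + q`, the step `q > p` being the cocycle identity
`f p q * f q (q - p) = f p (q - p)`. The remaining sign patterns follow from the first two
axioms of a reciprocity function.
-/

section

variable {G : Type*} [Group G]

structure IsReciprocityFunction (f : ℤ → ℤ → G) : Prop where
  neg_right : ∀ p q : ℤ, Int.gcd p q = 1 → f p (-q) = f (-p) q
  mul_neg_swap : ∀ p q : ℤ, Int.gcd p q = 1 → f p q * f (-q) p = 1
  cocycle : ∀ p q : ℤ, Int.gcd p q = 1 → f p (p + q) * f (p + q) q = f p q

structure IsDedekindSymbol (f D : ℤ → ℤ → G) : Prop where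
  add_right : ∀ p q : ℤ, Int.gcd p q = 1 → D p q = D p (q + p)
  neg_right : ∀ p q : ℤ, Int.gcd p q = 1 → D p (-q) = D (-p) q
  mul_inv_swap : ∀ p q : ℤ, Int.gcd p q = 1 → D p q * (D q (-p))⁻¹ = f p q

namespace IsDedekindSymbol

variable {f D : ℤ → ℤ → G}

theorem apply_add_mul (hD : IsDedekindSymbol f D) {p q : ℤ} (h : Int.gcd p q = 1) (k : ℤ) :
    D p (q + k * p) = D p q := by
  induction k using Int.induction_on with
  | zero => rw [zero_mul, add_zero]
  | succ k ih =>
    rw [add_one_mul, ← add_assoc, ← hD.add_right p _ (by rwa [Int.gcd_add_mul_right_right]), ih]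
  | pred k ih =>
    rw [← ih, hD.add_right p (q + (-k - 1) * p) (by rwa [Int.gcd_add_mul_right_right])]
    congr 1
    ring

theorem apply_emod (hD : IsDedekindSymbol f D) {p q : ℤ} (h : Int.gcd p q = 1) :
    D p (q % p) = D p q := by
  have h' : Int.gcd p (q % p) = 1 := by rwa [Int.gcd_comm, Int.gcd_emod, Int.gcd_comm]
  rw [← hD.apply_add_mul h' (q / p), Int.emod_def]
  ring_nf

theorem eq_mul (hD : IsDedekindSymbol f D) {p q : ℤ} (h : Int.gcd p q = 1) :
    D p q = f p q * D q (-p) :=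
  mul_inv_eq_iff_eq_mul.mp (hD.mul_inv_swap p q h)

theorem eq_of_apply_one_zero {D₁ D₂ : ℤ → ℤ → G} (h₁ : IsDedekindSymbol f D₁)
    (h₂ : IsDedekindSymbol f D₂) (h10 : D₁ 1 0 = D₂ 1 0) {p q : ℤ} (h : Int.gcd p q = 1) :
    D₁ p q = D₂ p q := by
  rcases eq_or_ne q 0 with rfl | hq
  · obtain rfl | rfl : p = 1 ∨ p = -1 := by rw [Int.gcd_zero_right] at h; omega
    · exact h10
    · have e₁ := h₁.neg_right 1 0 (by decide)
      have e₂ := h₂.neg_right 1 0 (by decide)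
      rw [neg_zero] at e₁ e₂
      rw [← e₁, ← e₂, h10]
  · have hr : Int.gcd q ((-p) % q) = 1 := by
      rwa [Int.gcd_comm, Int.gcd_emod, Int.neg_gcd]
    rw [h₁.eq_mul h, h₂.eq_mul h, ← h₁.apply_emod (by rwa [Int.gcd_neg, Int.gcd_comm]),
      ← h₂.apply_emod (by rwa [Int.gcd_neg, Int.gcd_comm]), eq_of_apply_one_zero h₁ h₂ h10 hr]
termination_by q.natAbs
decreasing_by
  have := Int.emod_nonneg (-p) hq
  have := Int.emod_lt (-p) hq
  omega

end IsDedekindSymbol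

variable (f : ℤ → ℤ → G)

/-- For `0 ≤ r < a` this unwinds `D a r = f a r * D r (-a)` along the Euclidean algorithm. -/
def reducedSymbol (a r : ℤ) : G :=
  if 0 < r then f a r * reducedSymbol r ((-a) % r) else 1
termination_by r.toNat
decreasing_by
  have := Int.emod_lt_of_pos (-a) ‹0 < r›
  have := Int.emod_nonneg (-a) (ne_of_gt ‹0 < r›)
  omega

/-- The value `f 0 q` on the line `p = 0` is forced by reciprocity, as `D q 0 = 1`. -/
def dedekindSymbol (p q : ℤ) : G :=
  if p = 0 then f 0 q else reducedSymbol f |p| (p.sign * q % p)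

theorem reducedSymbol_of_pos {r : ℤ} (hr : 0 < r) (a : ℤ) :
    reducedSymbol f a r = f a r * reducedSymbol f r ((-a) % r) := by
  rw [reducedSymbol, if_pos hr]

theorem reducedSymbol_zero (a : ℤ) : reducedSymbol f a 0 = 1 := by
  rw [reducedSymbol, if_neg (lt_irrefl 0)]

theorem dedekindSymbol_of_pos {p : ℤ} (hp : 0 < p) (q : ℤ) :
    dedekindSymbol f p q = reducedSymbol f p (q % p) := by
  rw [dedekindSymbol, if_neg hp.ne', abs_of_pos hp, Int.sign_eq_one_of_pos hp, one_mul]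

theorem dedekindSymbol_zero_right {p : ℤ} (hp : p ≠ 0) : dedekindSymbol f p 0 = 1 := by
  rw [dedekindSymbol, if_neg hp, mul_zero, Int.zero_emod, reducedSymbol_zero]

theorem dedekindSymbol_add_right (p q : ℤ) :
    dedekindSymbol f p (q + p) = dedekindSymbol f p q := by
  rcases eq_or_ne p 0 with rfl | hp
  · rw [add_zero]
  · rw [dedekindSymbol, dedekindSymbol, if_neg hp, if_neg hp, mul_add,
      Int.add_mul_emod_self_right]

theorem dedekindSymbol_of_lt {p q : ℤ} (hq : 0 < q) (hqp : q < p) :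
    dedekindSymbol f p q = f p q * dedekindSymbol f q (-p) := by
  rw [dedekindSymbol_of_pos f (hq.trans hqp), dedekindSymbol_of_pos f hq,
    Int.emod_eq_of_lt hq.le hqp, reducedSymbol_of_pos f hq]

variable {f}

theorem IsReciprocityFunction.apply_one_one (hf : IsReciprocityFunction f) : f 1 1 = 1 := by
  simpa using hf.cocycle 1 0 (by decide)

theorem dedekindSymbol_neg_right (hf : IsReciprocityFunction f) {p q : ℤ}
    (h : Int.gcd p q = 1) : dedekindSymbol f p (-q) = dedekindSymbol f (-p) q := by
  rcases eq_or_ne p 0 with rfl | hp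
  · simpa [dedekindSymbol] using hf.neg_right 0 q h
  · rw [dedekindSymbol, dedekindSymbol, if_neg hp, if_neg (neg_ne_zero.mpr hp), abs_neg,
      Int.sign_neg, Int.emod_neg, neg_mul, mul_neg]

theorem dedekindSymbol_eq_mul_of_pos (hf : IsReciprocityFunction f) {p q : ℤ} (hp : 0 < p)
    (hq : 0 < q) (h : Int.gcd p q = 1) :
    dedekindSymbol f p q = f p q * dedekindSymbol f q (-p) := by
  rcases lt_trichotomy q p with hqp | rfl | hpq
  · exact dedekindSymbol_of_lt f hq hqp
  · obtain rfl : q = 1 := by rw [Int.gcd_self] at h; omega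
    rw [hf.apply_one_one, one_mul, dedekindSymbol_of_pos f one_pos,
      dedekindSymbol_of_pos f one_pos]
    rfl
  · have hd : 0 < q - p := sub_pos.mpr hpq
    have ih := dedekindSymbol_eq_mul_of_pos hf hp hd (by rwa [Int.gcd_sub_self_right])
    have hcocycle : f p q * f q (q - p) = f p (q - p) := by
      simpa using hf.cocycle p (q - p) (by rwa [Int.gcd_sub_self_right])
    calc dedekindSymbol f p q
        = dedekindSymbol f p (q - p) := by
          rw [← dedekindSymbol_add_right f p (q - p), sub_add_cancel]
      _ = f p q * (f q (q - p) * dedekindSymbol f (q - p) (-q)) := by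
          rw [ih, ← mul_assoc, hcocycle, ← dedekindSymbol_add_right f (q - p) (-q),
            show -q + (q - p) = -p by ring]
      _ = f p q * dedekindSymbol f q (-p) := by
          rw [← dedekindSymbol_of_lt f hd (sub_lt_self q hp),
            ← dedekindSymbol_add_right f q (-p), neg_add_eq_sub]
termination_by (p + q).toNat
decreasing_by omega

theorem dedekindSymbol_eq_mul_of_pos_left (hf : IsReciprocityFunction f) {p q : ℤ} (hp : 0 < p)
    (hq : q ≠ 0) (h : Int.gcd p q = 1) :
    dedekindSymbol f p q = f p q * dedekindSymbol f q (-p) := by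
  rcases hq.lt_or_gt with hq | hq
  · have key := dedekindSymbol_eq_mul_of_pos hf (neg_pos.mpr hq) hp
      (by rwa [Int.neg_gcd, Int.gcd_comm])
    rw [neg_neg, ← dedekindSymbol_neg_right hf (by rwa [Int.gcd_comm])] at key
    rw [key, ← mul_assoc, hf.mul_neg_swap p q h, one_mul]
  · exact dedekindSymbol_eq_mul_of_pos hf hp hq h

theorem dedekindSymbol_eq_mul (hf : IsReciprocityFunction f) {p q : ℤ} (h : Int.gcd p q = 1) :
    dedekindSymbol f p q = f p q * dedekindSymbol f q (-p) := by
  rcases eq_or_ne q 0 with rfl | hq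
  · have hp : p ≠ 0 := by rintro rfl; simp at h
    rw [dedekindSymbol_zero_right f hp, dedekindSymbol, if_pos rfl,
      hf.neg_right 0 p (by rwa [Int.gcd_comm]), hf.mul_neg_swap p 0 h]
  rcases lt_trichotomy p 0 with hp | rfl | hp
  · have key := dedekindSymbol_eq_mul_of_pos_left hf (neg_pos.mpr hp) (neg_ne_zero.mpr hq)
      (by rwa [Int.neg_gcd, Int.gcd_neg])
    rwa [dedekindSymbol_neg_right hf (by rwa [Int.neg_gcd]), neg_neg,
      hf.neg_right (-p) q (by rwa [Int.neg_gcd]), neg_neg,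
      ← dedekindSymbol_neg_right hf (by rwa [Int.gcd_comm])] at key
  · rw [dedekindSymbol, if_pos rfl, neg_zero, dedekindSymbol_zero_right f hq, mul_one]
  · exact dedekindSymbol_eq_mul_of_pos_left hf hp hq h

theorem isDedekindSymbol_dedekindSymbol (hf : IsReciprocityFunction f) :
    IsDedekindSymbol f (dedekindSymbol f) where
  add_right p q _ := (dedekindSymbol_add_right f p q).symm
  neg_right _ _ h := dedekindSymbol_neg_right hf h
  mul_inv_swap _ _ h := mul_inv_eq_of_eq_mul (dedekindSymbol_eq_mul hf h)

end

/-- A reciprocity function uniquely determines a (normalized)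
generalized Dedekind symbol with that reciprocity function. -/
theorem reciprocity_determines_dedekind_symbol {G : Type*} [Group G]
    (f : ℤ → ℤ → G)
    (h16 : ∀ p q : ℤ, Int.gcd p q = 1 → f p (-q) = f (-p) q)
    (h17 : ∀ p q : ℤ, Int.gcd p q = 1 → f p q * f (-q) p = 1)
    (h18 : ∀ p q : ℤ, Int.gcd p q = 1 → f p (p + q) * f (p + q) q = f p q) :
    (∃ D : ℤ → ℤ → G,
      (∀ p q : ℤ, Int.gcd p q = 1 → D p q = D p (q + p)) ∧
      (∀ p q : ℤ, Int.gcd p q = 1 → D p (-q) = D (-p) q) ∧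
      (∀ p q : ℤ, Int.gcd p q = 1 → D p q * (D q (-p))⁻¹ = f p q) ∧
      D 1 0 = 1) ∧
    (∀ D₁ D₂ : ℤ → ℤ → G,
      ((∀ p q : ℤ, Int.gcd p q = 1 → D₁ p q = D₁ p (q + p)) ∧
       (∀ p q : ℤ, Int.gcd p q = 1 → D₁ p (-q) = D₁ (-p) q) ∧
       (∀ p q : ℤ, Int.gcd p q = 1 → D₁ p q * (D₁ q (-p))⁻¹ = f p q) ∧
       D₁ 1 0 = 1) →
      ((∀ p q : ℤ, Int.gcd p q = 1 → D₂ p q = D₂ p (q + p)) ∧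
       (∀ p q : ℤ, Int.gcd p q = 1 → D₂ p (-q) = D₂ (-p) q) ∧
       (∀ p q : ℤ, Int.gcd p q = 1 → D₂ p q * (D₂ q (-p))⁻¹ = f p q) ∧
       D₂ 1 0 = 1) →
      ∀ p q : ℤ, Int.gcd p q = 1 → D₁ p q = D₂ p q) := by
  constructor
  · have hD := isDedekindSymbol_dedekindSymbol ⟨h16, h17, h18⟩
    exact ⟨dedekindSymbol f, hD.add_right, hD.neg_right, hD.mul_inv_swap,
      dedekindSymbol_zero_right f one_ne_zero⟩
  · rintro D₁ D₂ ⟨hadd₁, hneg₁, hrec₁, hnorm₁⟩ ⟨hadd₂, hneg₂, hrec₂, hnorm₂⟩ p q h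
    exact IsDedekindSymbol.eq_of_apply_one_zero ⟨hadd₁, hneg₁, hrec₁⟩ ⟨hadd₂, hneg₂, hrec₂⟩
      (hnorm₁.trans hnorm₂.symm) h
end
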